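/- arXiv:2503.06577 — 4 statements merged into one kernel-verified Lean document; each statement's English description precedes it below -/
import Mathlib

section
/- Let (B, Θ) be a category with a structure of nullhomotopies satisfying the reduced interchange condition, with a Θ-strong zero object, strong Θ-kernels of all arrows, and strong Θ-cokernels of all terminal arrows. For every arrow g : X → Y with Θ-kernel (N(g), n_g, ν_g), the arrow Δ : N(0_Y) → N(g), defined as the unique arrow with Δ·n_g = 0 and Δ ∘ ν_g = ν_{0_Y}, is a categorical kernel of n_g : N(g) → X. -/
open CategoryTheory CategoryTheory.Limits

noncomputable section

universe v u

/-- A structure of nullhomotopies `Θ` on a category `B` (Grandis).  We encode the family of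
sets `Θ(g)`, for `g : X ⟶ Y`, as a total space `H X Y` together with a projection `ar`
assigning to every nullhomotopy the arrow on which it lives; thus `Θ(g) = {φ : H X Y // ar φ = g}`.
The maps `f ∘ - ∘ h : Θ(g) → Θ(f·g·h)` are encoded by `act`. -/
structure NullStruct (B : Type u) [Category.{v} B] where
  H : B → B → Type v
  ar : ∀ {X Y : B}, H X Y → (X ⟶ Y)
  act : ∀ {A X Y D : B}, (A ⟶ X) → H X Y → (Y ⟶ D) → H A D
  ar_act : ∀ {A X Y D : B} (f : A ⟶ X) (φ : H X Y) (h : Y ⟶ D),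
      ar (act f φ h) = f ≫ ar φ ≫ h
  act_id : ∀ {X Y : B} (φ : H X Y), act (𝟙 X) φ (𝟙 Y) = φ
  act_comp : ∀ {A' A X Y D D' : B} (f' : A' ⟶ A) (f : A ⟶ X) (φ : H X Y)
      (h : Y ⟶ D) (h' : D ⟶ D'),
      act (f' ≫ f) φ (h ≫ h') = act f' (act f φ h) h'

namespace NullStruct

variable {B : Type u} [Category.{v} B]

/-- The reduced interchange condition: `α ∘ g = f ∘ β` for `α ∈ Θ(f)`, `β ∈ Θ(g)`. -/
def ReducedInterchange (Θ : NullStruct B) : Prop :=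
  ∀ {A X Y : B} (f : A ⟶ X) (g : X ⟶ Y) (α : Θ.H A X) (β : Θ.H X Y),
    Θ.ar α = f → Θ.ar β = g → Θ.act (𝟙 A) α g = Θ.act f β (𝟙 Y)

/-- `(N, n, ν)` is a Θ-kernel of `g`. -/
structure IsKer (Θ : NullStruct B) {N X Y : B} (g : X ⟶ Y) (n : N ⟶ X) (ν : Θ.H N Y) : Prop where
  ar_eq : Θ.ar ν = n ≫ g
  lift : ∀ {A : B} (f : A ⟶ X) (φ : Θ.H A Y), Θ.ar φ = f ≫ g →
    ∃! f' : A ⟶ N, f' ≫ n = f ∧ Θ.act f' ν (𝟙 Y) = φ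

/-- `(N, n, ν)` is a strong Θ-kernel of `g`. -/
structure IsStrongKer (Θ : NullStruct B) {N X Y : B} (g : X ⟶ Y) (n : N ⟶ X) (ν : Θ.H N Y)
    extends NullStruct.IsKer Θ g n ν : Prop where
  liftH : ∀ {A : B} (f : A ⟶ N) (φ : Θ.H A X), Θ.ar φ = f ≫ n →
    Θ.act (𝟙 A) φ g = Θ.act f ν (𝟙 Y) →
    ∃! φ' : Θ.H A N, Θ.ar φ' = f ∧ Θ.act (𝟙 A) φ' n = φ

/-- `(Q, c, γ)` is a Θ-cokernel of `g`. -/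
structure IsCoker (Θ : NullStruct B) {X Y Q : B} (g : X ⟶ Y) (c : Y ⟶ Q) (γ : Θ.H X Q) : Prop where
  ar_eq : Θ.ar γ = g ≫ c
  desc : ∀ {D : B} (f : Y ⟶ D) (φ : Θ.H X D), Θ.ar φ = g ≫ f →
    ∃! f' : Q ⟶ D, c ≫ f' = f ∧ Θ.act (𝟙 X) γ f' = φ

/-- `(Q, c, γ)` is a strong Θ-cokernel of `g`. -/
structure IsStrongCoker (Θ : NullStruct B) {X Y Q : B} (g : X ⟶ Y) (c : Y ⟶ Q) (γ : Θ.H X Q)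
    extends NullStruct.IsCoker Θ g c γ : Prop where
  descH : ∀ {D : B} (f : Q ⟶ D) (φ : Θ.H Y D), Θ.ar φ = c ≫ f →
    Θ.act g φ (𝟙 D) = Θ.act (𝟙 X) γ f →
    ∃! φ' : Θ.H Q D, Θ.ar φ' = f ∧ Θ.act c φ' (𝟙 D) = φ

/-- A Θ-strong zero object: a zero object `Z` such that, for every `X`, the sets of
nullhomotopies `Θ(X ⟶ Z)` and `Θ(Z ⟶ X)` are singletons. -/
structure StrongZero (Θ : NullStruct B) where
  Z : B
  isZero : IsZero Z
  toZ : ∀ X : B, Θ.H X Z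
  toZ_uniq : ∀ (X : B) (φ : Θ.H X Z), φ = toZ X
  fromZ : ∀ X : B, Θ.H Z X
  fromZ_uniq : ∀ (X : B) (φ : Θ.H Z X), φ = fromZ X

/-- The zero arrow `X ⟶ Z ⟶ Y` through the Θ-strong zero object. -/
def StrongZero.zero {Θ : NullStruct B} (ζ : Θ.StrongZero) (X Y : B) : X ⟶ Y :=
  ζ.isZero.from_ X ≫ ζ.isZero.to_ Y

/-- The canonical nullhomotopy `*` on the zero arrow `X ⟶ Z ⟶ Y`. -/
def StrongZero.star {Θ : NullStruct B} (ζ : Θ.StrongZero) (X Y : B) : Θ.H X Y :=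
  Θ.act (𝟙 X) (ζ.toZ X) (ζ.isZero.to_ Y)

/-- An object `Y` is discrete: every nullhomotopy with codomain `Y` lives on the zero arrow
and is the canonical one (i.e. `Θ(g) = ∅` if `g ≠ 0`, and `Θ(0) = {*}`). -/
def IsDiscrete {Θ : NullStruct B} (ζ : Θ.StrongZero) (Y : B) : Prop :=
  ∀ (X : B) (φ : Θ.H X Y), Θ.ar φ = ζ.zero X Y ∧ φ = ζ.star X Y

/-- Codiscrete objects: dual of discrete. -/
def IsCodiscrete {Θ : NullStruct B} (ζ : Θ.StrongZero) (X : B) : Prop :=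
  ∀ (Y : B) (φ : Θ.H X Y), Θ.ar φ = ζ.zero X Y ∧ φ = ζ.star X Y

/-- `k` is a categorical kernel of `g` (with respect to the zero arrows through the
Θ-strong zero object). -/
def IsCatKer {Θ : NullStruct B} (ζ : Θ.StrongZero) {K X Y : B} (k : K ⟶ X) (g : X ⟶ Y) : Prop :=
  k ≫ g = ζ.zero K Y ∧
  ∀ {W : B} (w : W ⟶ X), w ≫ g = ζ.zero W Y → ∃! w' : W ⟶ K, w' ≫ k = w

/-- `(f, φ, g)` is S-exact: any factorization of `(f, φ)` through a Θ-kernel of `g`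
belongs to `S`. -/
def SExact (Θ : NullStruct B) (S : ∀ ⦃X Y : B⦄, (X ⟶ Y) → Prop)
    {W X Y : B} (f : W ⟶ X) (φ : Θ.H W Y) (g : X ⟶ Y) : Prop :=
  ∀ {N : B} (n : N ⟶ X) (ν : Θ.H N Y), Θ.IsKer g n ν →
    ∀ (w : W ⟶ N), w ≫ n = f → Θ.act w ν (𝟙 Y) = φ → S w

/-- `Y` is S-proper relative to the canonical arrow `η : Y ⟶ π₀(Y)`: the canonical
comparison `N(id_Y) ⟶ N(η_Y)` belongs to `S`. -/
def SProper (Θ : NullStruct B) (S : ∀ ⦃X Y : B⦄, (X ⟶ Y) → Prop)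
    {Y P : B} (η : Y ⟶ P) : Prop :=
  ∀ {NI : B} (nI : NI ⟶ Y) (νI : Θ.H NI Y), Θ.IsKer (𝟙 Y) nI νI →
  ∀ {NE : B} (nE : NE ⟶ Y) (νE : Θ.H NE P), Θ.IsKer η nE νE →
  ∀ (w : NI ⟶ NE), w ≫ nE = nI → Θ.act w νE (𝟙 P) = Θ.act (𝟙 NI) νI η → S w

/-- Condition (Sub) on a class `S` of arrows. -/
def CondSub {Θ : NullStruct B} (ζ : Θ.StrongZero) (S : ∀ ⦃X Y : B⦄, (X ⟶ Y) → Prop) : Prop :=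
  ∀ ⦃X Y X₀ Y₀ : B⦄ (g : X ⟶ Y) (g₀ : X₀ ⟶ Y₀) (x : X ⟶ X₀) (y : Y ⟶ Y₀),
    g ≫ y = x ≫ g₀ →
    ∀ ⦃Kg Kg₀ Kx Ky : B⦄ (kg : Kg ⟶ X) (kg₀ : Kg₀ ⟶ X₀) (kx : Kx ⟶ X) (ky : Ky ⟶ Y),
      IsCatKer ζ kg g → IsCatKer ζ kg₀ g₀ → IsCatKer ζ kx x → IsCatKer ζ ky y →
      ∀ (u : Kg ⟶ Kg₀) (v : Kx ⟶ Ky),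
        u ≫ kg₀ = kg ≫ x → v ≫ ky = kx ≫ g → S g → S u → S v

end NullStruct

/-!
Given `w : W ⟶ N(g)` with `w ≫ n_g = 0`, the nullhomotopy `w ∘ ν_g` lives on the zero arrow
`W ⟶ Y`, which factors through the zero object; the Θ-kernel property of `N(0_Y)` turns it into
a unique `w' : W ⟶ N(0_Y)` with `w' ∘ ν_{0_Y} = w ∘ ν_g`. Since `Δ ∘ ν_g = ν_{0_Y}`, both `w' ≫ Δ`
and `w` lift the pair `(0, w ∘ ν_g)` through `N(g)`, so they coincide, and the same computation
gives uniqueness of `w'`.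
-/

namespace NullStruct

variable {B : Type u} [Category.{v} B] {Θ : NullStruct B}

theorem act_comp_left {A' A X Y : B} (f' : A' ⟶ A) (f : A ⟶ X) (φ : Θ.H X Y) :
    Θ.act (f' ≫ f) φ (𝟙 Y) = Θ.act f' (Θ.act f φ (𝟙 Y)) (𝟙 Y) := by
  simpa using Θ.act_comp f' f φ (𝟙 Y) (𝟙 Y)

theorem StrongZero.comp_zero (ζ : Θ.StrongZero) {W X Y : B} (f : W ⟶ X) :
    f ≫ ζ.zero X Y = ζ.zero W Y := by
  simp only [StrongZero.zero, ← Category.assoc, ζ.isZero.eq_of_tgt (f ≫ _) (ζ.isZero.from_ W)]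

theorem StrongZero.zero_comp (ζ : Θ.StrongZero) {W X Y : B} (g : X ⟶ Y) :
    ζ.zero W X ≫ g = ζ.zero W Y := by
  simp only [StrongZero.zero, Category.assoc, ζ.isZero.eq_of_src (_ ≫ g) (ζ.isZero.to_ Y)]

namespace IsKer

variable {N X Y : B} {g : X ⟶ Y} {n : N ⟶ X} {ν : Θ.H N Y}

theorem ar_act (hk : Θ.IsKer g n ν) {A : B} (f : A ⟶ N) :
    Θ.ar (Θ.act f ν (𝟙 Y)) = f ≫ n ≫ g := by
  rw [Θ.ar_act, hk.ar_eq, Category.comp_id]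

theorem hom_ext (hk : Θ.IsKer g n ν) {A : B} {f₁ f₂ : A ⟶ N} (hn : f₁ ≫ n = f₂ ≫ n)
    (hν : Θ.act f₁ ν (𝟙 Y) = Θ.act f₂ ν (𝟙 Y)) : f₁ = f₂ := by
  obtain ⟨_, _, huniq⟩ := hk.lift (f₂ ≫ n) (Θ.act f₂ ν (𝟙 Y)) (by rw [hk.ar_act, Category.assoc])
  exact (huniq f₁ ⟨hn, hν⟩).trans (huniq f₂ ⟨rfl, rfl⟩).symm

theorem existsUnique_act_eq_of_isZero {Z : B} (hZ : IsZero Z) {h : Z ⟶ Y} {n : N ⟶ Z}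
    (hk : Θ.IsKer h n ν) {A : B} (φ : Θ.H A Y) (hφ : Θ.ar φ = hZ.from_ A ≫ h) :
    ∃! f : A ⟶ N, Θ.act f ν (𝟙 Y) = φ := by
  obtain ⟨f, ⟨_, hfν⟩, huniq⟩ := hk.lift (hZ.from_ A) φ hφ
  exact ⟨f, hfν, fun f' hf' => huniq f' ⟨hZ.eq_of_tgt _ _, hf'⟩⟩

end IsKer

end NullStruct

open NullStruct

theorem delta_is_kernel_of_ng_general
    {B : Type u} [Category.{v} B] (Θ : NullStruct B)
    (ζ : Θ.StrongZero)
    {X Y : B} (g : X ⟶ Y)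
    {Ng : B} (ng : Ng ⟶ X) (νg : Θ.H Ng Y) (hg : Θ.IsStrongKer g ng νg)
    {KY : B} (kY : KY ⟶ ζ.Z) (νY : Θ.H KY Y) (hkY : Θ.IsStrongKer (ζ.isZero.to_ Y) kY νY)
    (Δ : KY ⟶ Ng) (hΔ₀ : Δ ≫ ng = ζ.zero KY X) (hΔ : Θ.act Δ νg (𝟙 Y) = νY) :
    IsCatKer ζ Δ ng := by
  refine ⟨hΔ₀, fun {W} w hw => ?_⟩
  have hφ : Θ.ar (Θ.act w νg (𝟙 Y)) = ζ.zero W Y := by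
    rw [hg.ar_act, ← Category.assoc, hw, ζ.zero_comp]
  obtain ⟨w', hw', huniq⟩ :=
    hkY.existsUnique_act_eq_of_isZero ζ.isZero (Θ.act w νg (𝟙 Y)) hφ
  have hΔ_act (v : W ⟶ KY) : Θ.act (v ≫ Δ) νg (𝟙 Y) = Θ.act v νY (𝟙 Y) := by
    rw [act_comp_left, hΔ]
  refine ⟨w', hg.hom_ext ?_ ?_, fun v hv => huniq v ?_⟩
  · rw [Category.assoc, hΔ₀, ζ.comp_zero, hw]
  · rw [hΔ_act, hw']
  · change Θ.act v νY (𝟙 Y) = _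
    rw [← hΔ_act, hv]

/-- Lemma: `Δ : N(0_Y) ⟶ N(g)` is a categorical kernel of `n_g`.
Let `(B, Θ)` satisfy the reduced interchange condition, with a Θ-strong zero object `ζ`,
strong Θ-kernels of all arrows and strong Θ-cokernels of all terminal arrows.  For an
arrow `g : X ⟶ Y` with strong Θ-kernel `(N(g), n_g, ν_g)` and a strong Θ-kernel
`(N(0_Y), n_{0_Y}, ν_{0_Y})` of the initial arrow of `Y`, the arrow `Δ : N(0_Y) ⟶ N(g)`
(the unique arrow with `Δ ≫ n_g = 0` and `Δ ∘ ν_g = ν_{0_Y}`) is a categorical kernel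
of `n_g : N(g) ⟶ X`. -/
theorem delta_is_kernel_of_ng
    {B : Type u} [Category.{v} B] (Θ : NullStruct B)
    (hRI : Θ.ReducedInterchange) (ζ : Θ.StrongZero)
    (hK : ∀ (X Y : B) (g : X ⟶ Y), ∃ (N : B) (n : N ⟶ X) (ν : Θ.H N Y), Θ.IsStrongKer g n ν)
    (hC : ∀ (Y : B), ∃ (Q : B) (c : ζ.Z ⟶ Q) (γ : Θ.H Y Q),
        Θ.IsStrongCoker (ζ.isZero.from_ Y) c γ)
    {X Y : B} (g : X ⟶ Y)
    {Ng : B} (ng : Ng ⟶ X) (νg : Θ.H Ng Y) (hg : Θ.IsStrongKer g ng νg)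
    {KY : B} (kY : KY ⟶ ζ.Z) (νY : Θ.H KY Y) (hkY : Θ.IsStrongKer (ζ.isZero.to_ Y) kY νY)
    (Δ : KY ⟶ Ng) (hΔ₀ : Δ ≫ ng = ζ.zero KY X) (hΔ : Θ.act Δ νg (𝟙 Y) = νY) :
    IsCatKer ζ Δ ng :=
  delta_is_kernel_of_ng_general Θ ζ g ng νg hg kY νY hkY Δ hΔ₀ hΔ
end
end

section
/- Let (B, Θ) be a category with a structure of nullhomotopies satisfying the reduced interchange condition, with a Θ-strong zero object, strong Θ-kernels of all arrows, strong Θ-cokernels of all terminal arrows, and pullbacks. Let S be a class of arrows of B closed under composition, stable under pullbacks, containing all identities, and satisfying left cancellation (if f·g ∈ S then g ∈ S). If, for an arrow g : X → Y with Θ-kernel (N(g), n_g, ν_g), the objects Y and N(g) are S-proper and X is S-global, then the snail sequence N(0_{N(g)}) → N(0_X) → N(0_Y) → π₀(N(g)) → π₀(X) → π₀(Y) is S-exact at N(0_X), at N(0_Y), and at π₀(X). -/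
open CategoryTheory CategoryTheory.Limits

noncomputable section

universe v u

open NullStruct

/-! At each of the three places, the outgoing arrow lands in a discrete object (a Θ-kernel of an
arrow out of the zero object). Θ-kernels of such an arrow are then ordinary kernels carrying the
trivial nullhomotopy, so `S`-exactness reduces to lifting, up to precomposition with an arrow of
`S`, every arrow `p` killed by the outgoing arrow along the incoming one. At `N(0_X)` the lift
exists outright: the strong Θ-kernel property of `N(g)` turns the nullhomotopy of `p` composed
with `g` into a nullhomotopy of `0 ⟶ N(g)`. At `N(0_Y)` and at `π₀(X)` (after pulling back along
`η_X ∈ S`), `p` yields an arrow killed by `η` into `N(g)`, resp. `Y`; properness makes it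
nullhomotopic after an `S`-cover, and this nullhomotopy provides the lift. -/

namespace NullStruct

variable {B : Type u} [Category.{v} B] {Θ : NullStruct B}

@[simp]
lemma act_act {A' A X Y D D' : B} (f' : A' ⟶ A) (f : A ⟶ X) (φ : Θ.H X Y) (h : Y ⟶ D)
    (h' : D ⟶ D') : Θ.act f' (Θ.act f φ h) h' = Θ.act (f' ≫ f) φ (h ≫ h') :=
  (Θ.act_comp f' f φ h h').symm

lemma IsKer.hom_ext_s6 {N X Y : B} {g : X ⟶ Y} {n : N ⟶ X} {ν : Θ.H N Y} (hk : Θ.IsKer g n ν)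
    {A : B} {t t' : A ⟶ N} (hn : t ≫ n = t' ≫ n)
    (hν : Θ.act t ν (𝟙 Y) = Θ.act t' ν (𝟙 Y)) : t = t' := by
  have har : Θ.ar (Θ.act t' ν (𝟙 Y)) = (t' ≫ n) ≫ g := by simp [Θ.ar_act, hk.ar_eq]
  obtain ⟨_, -, huniq⟩ := hk.lift _ _ har
  exact (huniq t ⟨hn, hν⟩).trans (huniq t' ⟨rfl, rfl⟩).symm

namespace StrongZero

variable (ζ : Θ.StrongZero)

lemma comp_eq_zero {A C : B} (a : A ⟶ ζ.Z) (b : ζ.Z ⟶ C) : a ≫ b = ζ.zero A C := by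
  rw [ζ.isZero.eq_of_tgt a, ζ.isZero.eq_of_src b]; rfl

lemma comp_zero_s6 {A C D : B} (f : A ⟶ C) : f ≫ ζ.zero C D = ζ.zero A D := by
  rw [zero, ← Category.assoc, comp_eq_zero]

lemma zero_comp_s6 {A C D : B} (f : C ⟶ D) : ζ.zero A C ≫ f = ζ.zero A D := by
  rw [zero, Category.assoc, comp_eq_zero]

lemma ar_star (A C : B) : Θ.ar (ζ.star A C) = ζ.zero A C := by
  rw [star, Θ.ar_act, Category.id_comp, comp_eq_zero]

lemma act_star {A A' C : B} (f : A ⟶ A') : Θ.act f (ζ.star A' C) (𝟙 C) = ζ.star A C :=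
  calc Θ.act f (ζ.star A' C) (𝟙 C)
      = Θ.act (𝟙 A) (Θ.act f (ζ.toZ A') (𝟙 ζ.Z)) (ζ.isZero.to_ C) := by simp [star]
    _ = ζ.star A C := by rw [ζ.toZ_uniq A (Θ.act _ _ _)]; rfl

lemma zero_act {A C D : B} (β : Θ.H C D) : Θ.act (ζ.zero A C) β (𝟙 D) = ζ.star A D :=
  calc Θ.act (ζ.zero A C) β (𝟙 D)
      = Θ.act (ζ.isZero.from_ A) (Θ.act (ζ.isZero.to_ C) β (𝟙 D)) (𝟙 D) := by simp [zero]
    _ = ζ.star A D := by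
      rw [ζ.fromZ_uniq D (Θ.act _ β _), ← ζ.fromZ_uniq D (ζ.star ζ.Z D), act_star]

end StrongZero

variable {ζ : Θ.StrongZero}

lemma isDiscrete_of_isStrongKer (hRI : Θ.ReducedInterchange) {N W : B} {c : ζ.Z ⟶ W}
    {n : N ⟶ ζ.Z} {ν : Θ.H N W} (hk : Θ.IsStrongKer c n ν) : IsDiscrete ζ N := by
  intro A φ
  have hzero : Θ.ar φ = ζ.zero A N := by
    refine hk.hom_ext_s6 (ζ.isZero.eq_of_tgt _ _) ?_
    calc Θ.act (Θ.ar φ) ν (𝟙 W)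
        = Θ.act (𝟙 A) (Θ.act (𝟙 A) φ n) c := by simp [← hRI _ _ φ ν rfl hk.ar_eq]
      _ = Θ.act (ζ.zero A N) ν (𝟙 W) := by
        rw [ζ.toZ_uniq A (Θ.act _ φ n), ζ.zero_act, ζ.isZero.eq_of_src c]; rfl
  refine ⟨hzero, ?_⟩
  have hcond : Θ.act (𝟙 A) (ζ.toZ A) c = Θ.act (ζ.zero A N) ν (𝟙 W) := by
    rw [ζ.zero_act, ζ.isZero.eq_of_src c]; rfl
  obtain ⟨_, -, huniq⟩ := hk.liftH _ (ζ.toZ A) (ζ.isZero.eq_of_tgt _ _) hcond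
  exact (huniq φ ⟨hzero, ζ.toZ_uniq A _⟩).trans
    (huniq _ ⟨ζ.ar_star A N, ζ.toZ_uniq A _⟩).symm

def LiftsUpToCover (S : ∀ ⦃X Y : B⦄, (X ⟶ Y) → Prop) {W X P : B} (f : W ⟶ X) (p : P ⟶ X) : Prop :=
  ∃ (T : B) (t : T ⟶ W) (m : T ⟶ P), S m ∧ t ≫ f = m ≫ p

variable {S : ∀ ⦃X Y : B⦄, (X ⟶ Y) → Prop}

lemma sExact_star_of_liftsUpToCover
    (hS_cancel : ∀ {X Y Z : B} (u : X ⟶ Y) (v : Y ⟶ Z), S (u ≫ v) → S v)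
    {W X D : B} (hD : IsDiscrete ζ D) {f : W ⟶ X} {h : X ⟶ D}
    (hlift : ∀ {P : B} (p : P ⟶ X), p ≫ h = ζ.zero P D → LiftsUpToCover S f p) :
    SExact Θ S f (ζ.star W D) h := by
  intro N n ν hk w hwn _
  obtain ⟨hnh, hν⟩ := hD N ν
  rw [hk.ar_eq] at hnh
  obtain ⟨T, t, m, hm, htm⟩ := hlift n hnh
  have htw : t ≫ w = m := hk.hom_ext_s6 (by rw [Category.assoc, hwn, htm]) (by
    rw [hν, ζ.act_star, ζ.act_star])
  exact hS_cancel t w (htw ▸ hm)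

/-- The cover is the pullback of the comparison `N(id_Y) ⟶ N(η)`, which lies in `S`, along the
arrow `P ⟶ N(η)` given by `a` with the trivial nullhomotopy. -/
lemma SProper.exists_cover_nullhomotopy [HasPullbacks B]
    (hK : ∀ (X Y : B) (g : X ⟶ Y), ∃ (N : B) (n : N ⟶ X) (ν : Θ.H N Y), Θ.IsKer g n ν)
    (hS_pb : ∀ {P X Y Z : B} (fst : P ⟶ X) (snd : P ⟶ Y) (u : X ⟶ Z) (v : Y ⟶ Z),
      IsPullback fst snd u v → S v → S fst)
    {Y E : B} {η : Y ⟶ E} (hη : SProper Θ S η) {P : B} (a : P ⟶ Y)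
    (ha : a ≫ η = ζ.zero P E) :
    ∃ (T : B) (m : T ⟶ P) (φ : Θ.H T Y), S m ∧ Θ.ar φ = m ≫ a := by
  obtain ⟨NI, nI, νI, hkI⟩ := hK Y Y (𝟙 Y)
  obtain ⟨NE, nE, νE, hkE⟩ := hK Y E η
  obtain ⟨w, ⟨hw, hwν⟩, -⟩ := hkE.lift nI (Θ.act (𝟙 NI) νI η) (by simp [Θ.ar_act, hkI.ar_eq])
  obtain ⟨q, ⟨hq, -⟩, -⟩ := hkE.lift a (ζ.star P E) (by rw [ζ.ar_star, ha])
  refine ⟨pullback w q, pullback.snd w q, Θ.act (pullback.fst w q) νI (𝟙 Y),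
    hS_pb _ _ _ _ (IsPullback.of_hasPullback w q).flip (hη nI νI hkI nE νE hkE w hw hwν), ?_⟩
  rw [Θ.ar_act, hkI.ar_eq, ← hw, ← hq]
  simp [pullback.condition_assoc]

lemma eta_naturality {X Y CX CY PX PY : B} {f : X ⟶ Y} {γX : Θ.H X CX} {γY : Θ.H Y CY}
    {cf : CX ⟶ CY} {cY : ζ.Z ⟶ CY} {pY : PY ⟶ ζ.Z} {μX : Θ.H PX CX} {μY : Θ.H PY CY}
    {pf : PX ⟶ PY} {ηX : X ⟶ PX} {ηY : Y ⟶ PY} (hpY : Θ.IsKer cY pY μY)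
    (hcf : Θ.act (𝟙 X) γX cf = Θ.act f γY (𝟙 CY))
    (hpf : Θ.act pf μY (𝟙 CY) = Θ.act (𝟙 PX) μX cf)
    (hηX : Θ.act ηX μX (𝟙 CX) = γX) (hηY : Θ.act ηY μY (𝟙 CY) = γY) :
    ηX ≫ pf = f ≫ ηY := by
  refine hpY.hom_ext_s6 (ζ.isZero.eq_of_tgt _ _) ?_
  calc Θ.act (ηX ≫ pf) μY (𝟙 CY)
      = Θ.act ηX (Θ.act pf μY (𝟙 CY)) (𝟙 CY) := by simp
    _ = Θ.act (𝟙 X) (Θ.act ηX μX (𝟙 CX)) cf := by simp [hpf]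
    _ = Θ.act f (Θ.act ηY μY (𝟙 CY)) (𝟙 CY) := by rw [hηX, hcf, hηY]
    _ = Θ.act (f ≫ ηY) μY (𝟙 CY) := by simp

section Snail

variable {X Y Ng : B} {g : X ⟶ Y} {ng : Ng ⟶ X} {νg : Θ.H Ng Y}
  {KN KX KY : B} {kX : KX ⟶ ζ.Z} {kY : KY ⟶ ζ.Z} {νX : Θ.H KX X} {νY : Θ.H KY Y}
  {nmg : KX ⟶ KY}

lemma exists_lift_at_kerZero_source
    (hg : Θ.IsStrongKer g ng νg) {kN : KN ⟶ ζ.Z} {νN : Θ.H KN Ng}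
    (hkN : Θ.IsKer (ζ.isZero.to_ Ng) kN νN) (hkX : Θ.IsKer (ζ.isZero.to_ X) kX νX)
    {nng : KN ⟶ KX} (hnng : Θ.act nng νX (𝟙 X) = Θ.act (𝟙 KN) νN ng)
    (hnmg : Θ.act nmg νY (𝟙 Y) = Θ.act (𝟙 KX) νX g)
    {P : B} (p : P ⟶ KX) (hp : p ≫ nmg = ζ.zero P KY) : ∃ v : P ⟶ KN, v ≫ nng = p := by
  set ψ := Θ.act p νX (𝟙 X)
  have hψ : Θ.ar ψ = ζ.zero P Ng ≫ ng := by
    rw [Θ.ar_act, hkX.ar_eq, Category.comp_id, ζ.comp_eq_zero, ζ.comp_zero_s6, ζ.zero_comp_s6]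
  have hψg : Θ.act (𝟙 P) ψ g = Θ.act (ζ.zero P Ng) νg (𝟙 Y) :=
    calc Θ.act (𝟙 P) ψ g = Θ.act p (Θ.act nmg νY (𝟙 Y)) (𝟙 Y) := by simp [ψ, hnmg]
      _ = Θ.act (ζ.zero P Ng) νg (𝟙 Y) := by
        simp only [act_act, Category.comp_id, hp, ζ.zero_act]
  obtain ⟨χ, ⟨hχ, hχψ⟩, -⟩ := hg.liftH _ ψ hψ hψg
  obtain ⟨v, ⟨-, hvχ⟩, -⟩ := hkN.lift (ζ.isZero.from_ P) χ hχ
  refine ⟨v, hkX.hom_ext_s6 (ζ.isZero.eq_of_tgt _ _) ?_⟩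
  calc Θ.act (v ≫ nng) νX (𝟙 X) = Θ.act v (Θ.act nng νX (𝟙 X)) (𝟙 X) := by simp
    _ = Θ.act (𝟙 P) (Θ.act v νN (𝟙 Ng)) ng := by rw [hnng]; simp
    _ = ψ := by rw [hvχ, hχψ]

lemma liftsUpToCover_at_kerZero_target [HasPullbacks B] (hRI : Θ.ReducedInterchange)
    (hK : ∀ (X Y : B) (g : X ⟶ Y), ∃ (N : B) (n : N ⟶ X) (ν : Θ.H N Y), Θ.IsKer g n ν)
    (hS_pb : ∀ {P X Y Z : B} (fst : P ⟶ X) (snd : P ⟶ Y) (u : X ⟶ Z) (v : Y ⟶ Z),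
      IsPullback fst snd u v → S v → S fst)
    (hg : Θ.IsKer g ng νg) (hkX : Θ.IsKer (ζ.isZero.to_ X) kX νX)
    (hkY : Θ.IsKer (ζ.isZero.to_ Y) kY νY) (hnmg : Θ.act nmg νY (𝟙 Y) = Θ.act (𝟙 KX) νX g)
    {Δ : KY ⟶ Ng} (hΔ₀ : Δ ≫ ng = ζ.zero KY X) (hΔ : Θ.act Δ νg (𝟙 Y) = νY)
    {PN : B} {ηN : Ng ⟶ PN} (hNg_proper : SProper Θ S ηN)
    {P : B} (p : P ⟶ KY) (hp : p ≫ Δ ≫ ηN = ζ.zero P PN) : LiftsUpToCover S nmg p := by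
  obtain ⟨T, m, φ, hm, hφ⟩ :=
    hNg_proper.exists_cover_nullhomotopy hK hS_pb (p ≫ Δ) (by rw [Category.assoc, hp])
  obtain ⟨s, ⟨-, hs⟩, -⟩ := hkX.lift (ζ.isZero.from_ T) (Θ.act (𝟙 T) φ ng) (by
    rw [Θ.ar_act, hφ, Category.id_comp, Category.assoc, Category.assoc, hΔ₀, ζ.comp_zero_s6,
      ζ.comp_zero_s6]; rfl)
  refine ⟨T, s, m, hm, hkY.hom_ext_s6 (ζ.isZero.eq_of_tgt _ _) ?_⟩
  calc Θ.act (s ≫ nmg) νY (𝟙 Y) = Θ.act s (Θ.act nmg νY (𝟙 Y)) (𝟙 Y) := by simp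
    _ = Θ.act (𝟙 T) (Θ.act s νX (𝟙 X)) g := by rw [hnmg]; simp
    _ = Θ.act (𝟙 T) φ (ng ≫ g) := by rw [hs]; simp
    _ = Θ.act (m ≫ p) (Θ.act Δ νg (𝟙 Y)) (𝟙 Y) := by
      rw [hRI _ _ φ νg hφ hg.ar_eq]; simp
    _ = Θ.act (m ≫ p) νY (𝟙 Y) := by rw [hΔ]

lemma liftsUpToCover_at_pi0_source [HasPullbacks B]
    (hK : ∀ (X Y : B) (g : X ⟶ Y), ∃ (N : B) (n : N ⟶ X) (ν : Θ.H N Y), Θ.IsKer g n ν)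
    (hS_comp : ∀ {X Y Z : B} (u : X ⟶ Y) (v : Y ⟶ Z), S u → S v → S (u ≫ v))
    (hS_pb : ∀ {P X Y Z : B} (fst : P ⟶ X) (snd : P ⟶ Y) (u : X ⟶ Z) (v : Y ⟶ Z),
      IsPullback fst snd u v → S v → S fst)
    (hg : Θ.IsKer g ng νg) {PN PX PY : B} {ηN : Ng ⟶ PN} {ηX : X ⟶ PX} {ηY : Y ⟶ PY}
    {png : PN ⟶ PX} {pg : PX ⟶ PY} (hN : ηN ≫ png = ng ≫ ηX) (hX : ηX ≫ pg = g ≫ ηY)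
    (hY_proper : SProper Θ S ηY) (hX_global : S ηX)
    {P : B} (p : P ⟶ PX) (hp : p ≫ pg = ζ.zero P PY) : LiftsUpToCover S png p := by
  have hsnd : (pullback.snd p ηX ≫ g) ≫ ηY = ζ.zero _ PY := by
    rw [Category.assoc, ← hX, ← Category.assoc, ← pullback.condition, Category.assoc, hp,
      ζ.comp_zero_s6]
  obtain ⟨T, m, φ, hm, hφ⟩ := hY_proper.exists_cover_nullhomotopy hK hS_pb _ hsnd
  obtain ⟨u, ⟨hu, -⟩, -⟩ := hg.lift (m ≫ pullback.snd p ηX) φ (by rw [hφ, Category.assoc])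
  refine ⟨T, u ≫ ηN, m ≫ pullback.fst p ηX,
    hS_comp _ _ hm (hS_pb _ _ _ _ (IsPullback.of_hasPullback p ηX) hX_global), ?_⟩
  rw [Category.assoc, hN, ← Category.assoc, hu, Category.assoc, Category.assoc,
    pullback.condition]

end Snail

end NullStruct

theorem snail_sequence_S_exact_general
    {B : Type u} [Category.{v} B] [HasPullbacks B] (Θ : NullStruct B)
    (hRI : Θ.ReducedInterchange) (ζ : Θ.StrongZero)
    (hK : ∀ (X Y : B) (g : X ⟶ Y), ∃ (N : B) (n : N ⟶ X) (ν : Θ.H N Y), Θ.IsStrongKer g n ν)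
    -- the class `S` of arrows
    (S : ∀ ⦃X Y : B⦄, (X ⟶ Y) → Prop)
    (hS_comp : ∀ {X Y Z : B} (u : X ⟶ Y) (v : Y ⟶ Z), S u → S v → S (u ≫ v))
    (hS_pb : ∀ {P X Y Z : B} (fst : P ⟶ X) (snd : P ⟶ Y) (u : X ⟶ Z) (v : Y ⟶ Z),
        IsPullback fst snd u v → S v → S fst)
    (hS_id : ∀ X : B, S (𝟙 X))
    (hS_cancel : ∀ {X Y Z : B} (u : X ⟶ Y) (v : Y ⟶ Z), S (u ≫ v) → S v)
    -- the arrow `g` and its strong Θ-kernel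
    {X Y : B} (g : X ⟶ Y)
    {Ng : B} (ng : Ng ⟶ X) (νg : Θ.H Ng Y) (hg : Θ.IsStrongKer g ng νg)
    -- strong Θ-kernels of the initial arrows of `N(g)`, `X`, `Y`
    {KN : B} (kN : KN ⟶ ζ.Z) (νN : Θ.H KN Ng) (hkN : Θ.IsStrongKer (ζ.isZero.to_ Ng) kN νN)
    {KX : B} (kX : KX ⟶ ζ.Z) (νX : Θ.H KX X) (hkX : Θ.IsStrongKer (ζ.isZero.to_ X) kX νX)
    {KY : B} (kY : KY ⟶ ζ.Z) (νY : Θ.H KY Y) (hkY : Θ.IsStrongKer (ζ.isZero.to_ Y) kY νY)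
    -- `π₀`-data of `N(g)`, `X`, `Y`
    {CN : B} (cN : ζ.Z ⟶ CN) (γN : Θ.H Ng CN)
    {PN : B} (pN : PN ⟶ ζ.Z) (μN : Θ.H PN CN) (hpN : Θ.IsStrongKer cN pN μN)
    (ηN : Ng ⟶ PN) (hηN : Θ.act ηN μN (𝟙 CN) = γN)
    {CX : B} (cX : ζ.Z ⟶ CX) (γX : Θ.H X CX)
    {PX : B} (pX : PX ⟶ ζ.Z) (μX : Θ.H PX CX) (hpX : Θ.IsStrongKer cX pX μX)
    (ηX : X ⟶ PX) (hηX : Θ.act ηX μX (𝟙 CX) = γX)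
    {CY : B} (cY : ζ.Z ⟶ CY) (γY : Θ.H Y CY)
    {PY : B} (pY : PY ⟶ ζ.Z) (μY : Θ.H PY CY) (hpY : Θ.IsStrongKer cY pY μY)
    (ηY : Y ⟶ PY) (hηY : Θ.act ηY μY (𝟙 CY) = γY)
    -- the arrows of the snail sequence
    (nng : KN ⟶ KX) (hnng : Θ.act nng νX (𝟙 X) = Θ.act (𝟙 KN) νN ng)
    (nmg : KX ⟶ KY) (hnmg : Θ.act nmg νY (𝟙 Y) = Θ.act (𝟙 KX) νX g)
    (Δ : KY ⟶ Ng) (hΔ₀ : Δ ≫ ng = ζ.zero KY X) (hΔ : Θ.act Δ νg (𝟙 Y) = νY)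
    (cng : CN ⟶ CX) (hcng : Θ.act (𝟙 Ng) γN cng = Θ.act ng γX (𝟙 CX))
    (png : PN ⟶ PX) (hpng : Θ.act png μX (𝟙 CX) = Θ.act (𝟙 PN) μN cng)
    (cg : CX ⟶ CY) (hcg : Θ.act (𝟙 X) γX cg = Θ.act g γY (𝟙 CY))
    (pg : PX ⟶ PY) (hpg : Θ.act pg μY (𝟙 CY) = Θ.act (𝟙 PX) μX cg)
    -- `Y` and `N(g)` are S-proper, `X` is S-global
    (hY_proper : SProper Θ S ηY) (hNg_proper : SProper Θ S ηN)
    (hX_global : S ηX) :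
    SExact Θ S nng (ζ.star KN KY) nmg ∧
    SExact Θ S nmg (ζ.star KX PN) (Δ ≫ ηN) ∧
    SExact Θ S png (ζ.star PN PY) pg := by
  have hK' : ∀ (X Y : B) (g : X ⟶ Y), ∃ (N : B) (n : N ⟶ X) (ν : Θ.H N Y), Θ.IsKer g n ν :=
    fun X Y g => let ⟨N, n, ν, h⟩ := hK X Y g; ⟨N, n, ν, h.toIsKer⟩
  refine ⟨?_, ?_, ?_⟩
  · apply sExact_star_of_liftsUpToCover hS_cancel (isDiscrete_of_isStrongKer hRI hkY)
    intro P p hp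
    obtain ⟨v, hv⟩ := exists_lift_at_kerZero_source hg hkN.toIsKer hkX.toIsKer hnng hnmg p hp
    exact ⟨P, v, 𝟙 P, hS_id P, by rw [hv, Category.id_comp]⟩
  · apply sExact_star_of_liftsUpToCover hS_cancel (isDiscrete_of_isStrongKer hRI hpN)
    exact liftsUpToCover_at_kerZero_target hRI hK' hS_pb hg.toIsKer hkX.toIsKer hkY.toIsKer
      hnmg hΔ₀ hΔ hNg_proper
  · apply sExact_star_of_liftsUpToCover hS_cancel (isDiscrete_of_isStrongKer hRI hpY)
    exact liftsUpToCover_at_pi0_source hK' hS_comp hS_pb hg.toIsKer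
      (eta_naturality hpX.toIsKer hcng hpng hηN hηX)
      (eta_naturality hpY.toIsKer hcg hpg hηX hηY) hY_proper hX_global

/-- Exactness of the snail sequence at `N(0_X)`, `N(0_Y)` and `π₀(X)`.
Let `(B, Θ)` satisfy the reduced interchange condition, with a Θ-strong zero object `ζ`,
strong Θ-kernels of all arrows, strong Θ-cokernels of all terminal arrows, and pullbacks.
Let `S` be a class of arrows closed under composition, stable under pullbacks, containing
the identities and with the left cancellation property.  If `Y` and `N(g)` are S-proper
and `X` is S-global, then the snail sequence of `g` is S-exact at `N(0_X)`, at `N(0_Y)`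
and at `π₀(X)`. -/
theorem snail_sequence_S_exact
    {B : Type u} [Category.{v} B] [HasPullbacks B] (Θ : NullStruct B)
    (hRI : Θ.ReducedInterchange) (ζ : Θ.StrongZero)
    (hK : ∀ (X Y : B) (g : X ⟶ Y), ∃ (N : B) (n : N ⟶ X) (ν : Θ.H N Y), Θ.IsStrongKer g n ν)
    (hC : ∀ (Y : B), ∃ (Q : B) (c : ζ.Z ⟶ Q) (γ : Θ.H Y Q),
        Θ.IsStrongCoker (ζ.isZero.from_ Y) c γ)
    -- the class `S` of arrows
    (S : ∀ ⦃X Y : B⦄, (X ⟶ Y) → Prop)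
    (hS_comp : ∀ {X Y Z : B} (u : X ⟶ Y) (v : Y ⟶ Z), S u → S v → S (u ≫ v))
    (hS_pb : ∀ {P X Y Z : B} (fst : P ⟶ X) (snd : P ⟶ Y) (u : X ⟶ Z) (v : Y ⟶ Z),
        IsPullback fst snd u v → S v → S fst)
    (hS_id : ∀ X : B, S (𝟙 X))
    (hS_cancel : ∀ {X Y Z : B} (u : X ⟶ Y) (v : Y ⟶ Z), S (u ≫ v) → S v)
    -- the arrow `g` and its strong Θ-kernel
    {X Y : B} (g : X ⟶ Y)
    {Ng : B} (ng : Ng ⟶ X) (νg : Θ.H Ng Y) (hg : Θ.IsStrongKer g ng νg)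
    -- strong Θ-kernels of the initial arrows of `N(g)`, `X`, `Y`
    {KN : B} (kN : KN ⟶ ζ.Z) (νN : Θ.H KN Ng) (hkN : Θ.IsStrongKer (ζ.isZero.to_ Ng) kN νN)
    {KX : B} (kX : KX ⟶ ζ.Z) (νX : Θ.H KX X) (hkX : Θ.IsStrongKer (ζ.isZero.to_ X) kX νX)
    {KY : B} (kY : KY ⟶ ζ.Z) (νY : Θ.H KY Y) (hkY : Θ.IsStrongKer (ζ.isZero.to_ Y) kY νY)
    -- `π₀`-data of `N(g)`, `X`, `Y`
    {CN : B} (cN : ζ.Z ⟶ CN) (γN : Θ.H Ng CN)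
    (hcN : Θ.IsStrongCoker (ζ.isZero.from_ Ng) cN γN)
    {PN : B} (pN : PN ⟶ ζ.Z) (μN : Θ.H PN CN) (hpN : Θ.IsStrongKer cN pN μN)
    (ηN : Ng ⟶ PN) (hηN : Θ.act ηN μN (𝟙 CN) = γN)
    {CX : B} (cX : ζ.Z ⟶ CX) (γX : Θ.H X CX)
    (hcX : Θ.IsStrongCoker (ζ.isZero.from_ X) cX γX)
    {PX : B} (pX : PX ⟶ ζ.Z) (μX : Θ.H PX CX) (hpX : Θ.IsStrongKer cX pX μX)
    (ηX : X ⟶ PX) (hηX : Θ.act ηX μX (𝟙 CX) = γX)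
    {CY : B} (cY : ζ.Z ⟶ CY) (γY : Θ.H Y CY)
    (hcY : Θ.IsStrongCoker (ζ.isZero.from_ Y) cY γY)
    {PY : B} (pY : PY ⟶ ζ.Z) (μY : Θ.H PY CY) (hpY : Θ.IsStrongKer cY pY μY)
    (ηY : Y ⟶ PY) (hηY : Θ.act ηY μY (𝟙 CY) = γY)
    -- the arrows of the snail sequence
    (nng : KN ⟶ KX) (hnng₀ : nng ≫ kX = kN)
    (hnng : Θ.act nng νX (𝟙 X) = Θ.act (𝟙 KN) νN ng)
    (nmg : KX ⟶ KY) (hnmg₀ : nmg ≫ kY = kX)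
    (hnmg : Θ.act nmg νY (𝟙 Y) = Θ.act (𝟙 KX) νX g)
    (Δ : KY ⟶ Ng) (hΔ₀ : Δ ≫ ng = ζ.zero KY X) (hΔ : Θ.act Δ νg (𝟙 Y) = νY)
    (cng : CN ⟶ CX) (hcng₀ : cN ≫ cng = cX)
    (hcng : Θ.act (𝟙 Ng) γN cng = Θ.act ng γX (𝟙 CX))
    (png : PN ⟶ PX) (hpng₀ : png ≫ pX = pN)
    (hpng : Θ.act png μX (𝟙 CX) = Θ.act (𝟙 PN) μN cng)
    (cg : CX ⟶ CY) (hcg₀ : cX ≫ cg = cY)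
    (hcg : Θ.act (𝟙 X) γX cg = Θ.act g γY (𝟙 CY))
    (pg : PX ⟶ PY) (hpg₀ : pg ≫ pY = pX)
    (hpg : Θ.act pg μY (𝟙 CY) = Θ.act (𝟙 PX) μX cg)
    -- `Y` and `N(g)` are S-proper, `X` is S-global
    (hY_proper : SProper Θ S ηY) (hNg_proper : SProper Θ S ηN)
    (hX_global : S ηX) :
    SExact Θ S nng (ζ.star KN KY) nmg ∧
    SExact Θ S nmg (ζ.star KX PN) (Δ ≫ ηN) ∧
    SExact Θ S png (ζ.star PN PY) pg :=
  snail_sequence_S_exact_general Θ hRI ζ hK S hS_comp hS_pb hS_id hS_cancel g ng νg hg kN νN hkN kX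
    νX hkX kY νY hkY cN γN pN μN hpN ηN hηN cX γX pX μX hpX ηX hηX cY γY pY μY hpY ηY hηY nng hnng
    nmg hnmg Δ hΔ₀ hΔ cng hcng png hpng cg hcg pg hpg hY_proper hNg_proper hX_global
end
end

section
/- Let A be a pointed regular category with kernels and cokernels. If C• is a chain complex in A all of whose differentials d^C_n are proper, then for every n the canonical arrow h^{FC}_n : Cok(d^C_{n+1}) → Ker(d^C_{n-1}) (the unique arrow with q^C_n·h^{FC}_n·k^C_{n-1} = d^C_n) is proper. -/
/-!
Write `d = π ≫ h ≫ k` with `π` the cokernel projection, `h = h^{FC}` and `k` the kernel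
inclusion, and factor `h = e ≫ m` (regular epi, mono). Since `d` is proper, its factorization
through `Ker(Cok d)` is a strong epimorphism, so `Ker(Cok d)` lifts along the mono `m ≫ k`.
As `Ker(Cok h) ⟶ Ker(Cok d)` via `k`, the subobject `Ker(Cok h)` lies inside `m`; hence the
comparison `I ⟶ Ker(Cok h)` is an isomorphism and the canonical factorization of `h` is `e`
up to isomorphism, a regular epimorphism.
-/

open CategoryTheory CategoryTheory.Limits

noncomputable section

universe v u

variable {A : Type u} [Category.{v} A] [HasZeroMorphisms A] [HasKernels A] [HasCokernels A]

/-- The factorization `C_q ⟶ Ker(d r s)` of the differential `d q r`. -/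
def kFac (C : ChainComplex A ℤ) (q r s : ℤ) : C.X q ⟶ kernel (C.d r s) :=
  kernel.lift (C.d r s) (C.d q r) (C.d_comp_d q r s)

/-- The canonical arrow `h^{FC} : Cok(d p q) ⟶ Ker(d r s)` induced by the differential
`d q r` of the complex `C` (for a window `p, q, r, s` of indices): the unique arrow with
`q^C ≫ h^{FC} ≫ k^C = d q r`. -/
def hSeq (C : ChainComplex A ℤ) (p q r s : ℤ) : cokernel (C.d p q) ⟶ kernel (C.d r s) :=
  cokernel.desc (C.d p q) (kFac C q r s) (by
    rw [← cancel_mono (kernel.ι (C.d r s))]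
    simp [kFac])

/-- The canonical connecting arrow `Cok(h^{FC}_{n+1}) ⟶ Ker(h^{FC}_n)` (for a window
`p, q, r, s, t` of indices), the unique arrow `i` with
`cokernel.π ≫ i ≫ kernel.ι = kernel.ι ≫ cokernel.π`. -/
def iSeq (C : ChainComplex A ℤ) (p q r s t : ℤ) :
    cokernel (hSeq C p q r s) ⟶ kernel (hSeq C q r s t) :=
  kernel.lift (hSeq C q r s t)
    (cokernel.desc (hSeq C p q r s) (kernel.ι (C.d r s) ≫ cokernel.π (C.d q r))
      (by
        ext
        simp [hSeq, kFac]))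
    (by
      rw [← cancel_mono (kernel.ι (C.d s t)), ← cancel_epi (cokernel.π (hSeq C p q r s))]
      simp only [Category.assoc]
      rw [cokernel.π_desc_assoc (hSeq C p q r s), zero_comp, comp_zero]
      simp [hSeq, kFac])

/-- The arrow induced by a chain map on the cokernels of the differentials. -/
def cokMap {B C : ChainComplex A ℤ} (g : B ⟶ C) (p q : ℤ) :
    cokernel (B.d p q) ⟶ cokernel (C.d p q) :=
  cokernel.map (B.d p q) (C.d p q) (g.f p) (g.f q) (g.comm p q).symm

/-- The arrow induced by a chain map on the kernels of the differentials. -/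
def kerMap {B C : ChainComplex A ℤ} (g : B ⟶ C) (r s : ℤ) :
    kernel (B.d r s) ⟶ kernel (C.d r s) :=
  kernel.map (B.d r s) (C.d r s) (g.f r) (g.f s) (g.comm r s).symm

/-- The canonical factorization of an arrow through the kernel of its cokernel. -/
def properFact {X Y : A} (u : X ⟶ Y) : X ⟶ kernel (cokernel.π u) :=
  kernel.lift (cokernel.π u) u (cokernel.condition u)

/-- An arrow is proper if its canonical factorization through the kernel of its
cokernel is a regular epimorphism. -/
def IsProper {X Y : A} (u : X ⟶ Y) : Prop :=
  Nonempty (RegularEpi (properFact u))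

theorem kernel_ι_cokernel_π_comp_eq_zero {X Y Z : A} {u : X ⟶ Y} {g : Y ⟶ Z}
    (hg : u ≫ g = 0) : kernel.ι (cokernel.π u) ≫ g = 0 := by
  rw [← cokernel.π_desc u g hg, kernel.condition_assoc, zero_comp]

theorem IsProper.exists_lift_kernel_cokernel {X Y I : A} {d : X ⟶ Y} (hd : IsProper d)
    (f : X ⟶ I) (n : I ⟶ Y) [Mono n] (hfac : f ≫ n = d) :
    ∃ t : kernel (cokernel.π d) ⟶ I, t ≫ n = kernel.ι (cokernel.π d) := by
  have := hd.some.effectiveEpi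
  have sq : CommSq f (properFact d) n (kernel.ι (cokernel.π d)) :=
    ⟨by rw [properFact, kernel.lift_ι, hfac]⟩
  exact ⟨sq.lift, sq.fac_right⟩

theorem isProper_of_regularEpi_comp_mono {X Y I : A} {u : X ⟶ Y} (e : X ⟶ I) (m : I ⟶ Y)
    (he : RegularEpi e) [Mono m] (hfac : e ≫ m = u)
    (hlift : ∃ ψ : kernel (cokernel.π u) ⟶ I, ψ ≫ m = kernel.ι (cokernel.π u)) :
    IsProper u := by
  obtain ⟨ψ, hψ⟩ := hlift
  have hm : m ≫ cokernel.π u = 0 := by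
    have := he.epi
    rw [← cancel_epi e, ← Category.assoc, hfac, cokernel.condition, comp_zero]
  set m' := kernel.lift (cokernel.π u) m hm
  have hm' : m' ≫ kernel.ι (cokernel.π u) = m := kernel.lift_ι _ _ _
  have : Mono m' := mono_of_mono_fac hm'
  have : IsSplitEpi m' := ⟨⟨⟨ψ, by
    rw [← cancel_mono (kernel.ι (cokernel.π u)), Category.assoc, hm', hψ, Category.id_comp]⟩⟩⟩
  have : IsIso m' := isIso_of_mono_of_isSplitEpi m'
  have hw : e ≫ m' = properFact u := by
    rw [← cancel_mono (kernel.ι (cokernel.π u)), Category.assoc, hm', hfac, properFact,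
      kernel.lift_ι]
  exact ⟨RegularEpi.ofArrowIso (Arrow.isoMk (Iso.refl X) (asIso m') (by simp [hw]) :
    Arrow.mk e ≅ Arrow.mk (properFact u)) he⟩

theorem IsProper.of_epi_comp_comp_mono {X X' Y' Y : A} {d : X ⟶ Y} (hd : IsProper d)
    (π : X ⟶ X') (h : X' ⟶ Y') (k : Y' ⟶ Y) [Epi π] [Mono k] (hfac : π ≫ h ≫ k = d)
    {I : A} (e : X' ⟶ I) (m : I ⟶ Y') (he : RegularEpi e) [Mono m] (hem : e ≫ m = h) :
    IsProper h := by
  refine isProper_of_regularEpi_comp_mono e m he hem ?_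
  obtain ⟨t, ht⟩ := hd.exists_lift_kernel_cokernel (π ≫ e) (m ≫ k)
    (by rw [Category.assoc, reassoc_of% hem, hfac])
  have hhk : h ≫ k ≫ cokernel.π d = 0 := by
    rw [← cancel_epi π, reassoc_of% hfac, cokernel.condition, comp_zero]
  set θ := kernel.lift (cokernel.π d) (kernel.ι (cokernel.π h) ≫ k)
    (by rw [Category.assoc, kernel_ι_cokernel_π_comp_eq_zero hhk])
  refine ⟨θ ≫ t, ?_⟩
  rw [← cancel_mono k, Category.assoc, Category.assoc, ht, kernel.lift_ι]

theorem cokernel_π_hSeq_kernel_ι (C : ChainComplex A ℤ) (p q r s : ℤ) :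
    cokernel.π (C.d p q) ≫ hSeq C p q r s ≫ kernel.ι (C.d r s) = C.d q r := by
  simp [hSeq, kFac]

theorem hSeq_proper_of_proper_complex_general
    (A : Type u) [Category.{v} A] [HasZeroMorphisms A]
    [HasKernels A] [HasCokernels A]
    (hfact : ∀ {X Y : A} (f : X ⟶ Y), ∃ (I : A) (e : X ⟶ I) (m : I ⟶ Y),
        Nonempty (RegularEpi e) ∧ Mono m ∧ e ≫ m = f)
    (C : ChainComplex A ℤ)
    (hprop : ∀ i j : ℤ, j + 1 = i → IsProper (C.d i j)) :
    ∀ p q r s : ℤ, q + 1 = p → r + 1 = q → s + 1 = r → IsProper (hSeq C p q r s) := by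
  intro p q r s _ hq _
  obtain ⟨I, e, m, ⟨he⟩, _, hem⟩ := hfact (hSeq C p q r s)
  exact (hprop q r hq).of_epi_comp_comp_mono _ _ _ (cokernel_π_hSeq_kernel_ι C p q r s) e m he hem

/-- **Statement 13** (Lemma: the sequentiable family of a proper complex is proper).
Let `A` be a pointed regular category with kernels and cokernels.  If all the
differentials of a chain complex `C` are proper, then so is every canonical arrow
`h^{FC}_n : Cok(d_{n+1}) ⟶ Ker(d_{n-1})`. -/
theorem hSeq_proper_of_proper_complex
    (A : Type u) [Category.{v} A] [HasZeroObject A] [HasZeroMorphisms A]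
    [HasFiniteLimits A] [HasKernels A] [HasCokernels A]
    (hfact : ∀ {X Y : A} (f : X ⟶ Y), ∃ (I : A) (e : X ⟶ I) (m : I ⟶ Y),
        Nonempty (RegularEpi e) ∧ Mono m ∧ e ≫ m = f)
    (hstab : ∀ {P X Y Z : A} (fst : P ⟶ X) (snd : P ⟶ Y) (u : X ⟶ Z) (v : Y ⟶ Z),
        IsPullback fst snd u v → Nonempty (RegularEpi v) → Nonempty (RegularEpi fst))
    (C : ChainComplex A ℤ)
    (hprop : ∀ i j : ℤ, j + 1 = i → IsProper (C.d i j)) :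
    ∀ p q r s : ℤ, q + 1 = p → r + 1 = q → s + 1 = r → IsProper (hSeq C p q r s) :=
  hSeq_proper_of_proper_complex_general A hfact C hprop
end
end

section
/- Let A be a pointed category with kernels and cokernels. Given composable arrows g : B → C and h : C → D, if the composite g·h is proper and h is a monomorphism, then g is proper; moreover the canonical factorizations of g·h and of g through the kernels of their cokernels coincide up to a (unique) isomorphism Ker(c_{g·h}) ≅ Ker(c_g) compatible with the inclusions into D and C. -/
open CategoryTheory CategoryTheory.Limits

noncomputable section

universe v u

variable {A : Type u} [Category.{v} A] [HasZeroMorphisms A] [HasKernels A] [HasCokernels A]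

/-! Post-composition with `h` induces a comparison map `Ker(c_g) ⟶ Ker(c_{g ≫ h})`, and
`properFact (g ≫ h)` is `properFact g` followed by it. For `h` mono the comparison map is mono;
since the regular, hence strong, epimorphism `properFact (g ≫ h)` factors through it, it is an
isomorphism. So `properFact g` differs from `properFact (g ≫ h)` by an isomorphism. -/

theorem isProper_iff_isRegularEpi {X Y : A} (u : X ⟶ Y) :
    IsProper u ↔ IsRegularEpi (properFact u) :=
  ⟨fun h ↦ ⟨h⟩, fun h ↦ h.regularEpi⟩

section

variable {B C D : A} (g : B ⟶ C) (h : C ⟶ D)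

def kernelCokernelCompMap : kernel (cokernel.π g) ⟶ kernel (cokernel.π (g ≫ h)) :=
  kernel.map _ _ h (cokernel.map g (g ≫ h) (𝟙 B) h (by simp)) (by simp)

@[simp]
theorem kernelCokernelCompMap_ι :
    kernelCokernelCompMap g h ≫ kernel.ι (cokernel.π (g ≫ h)) = kernel.ι (cokernel.π g) ≫ h :=
  kernel.lift_ι _ _ _

theorem properFact_comp_kernelCokernelCompMap :
    properFact g ≫ kernelCokernelCompMap g h = properFact (g ≫ h) := by
  ext
  simp [properFact]

instance [Mono h] : Mono (kernelCokernelCompMap g h) :=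
  mono_of_mono_fac (kernelCokernelCompMap_ι g h)

theorem isIso_kernelCokernelCompMap [Mono h] (hp : IsProper (g ≫ h)) :
    IsIso (kernelCokernelCompMap g h) := by
  rw [isProper_iff_isRegularEpi, ← properFact_comp_kernelCokernelCompMap] at hp
  have := strongEpi_of_strongEpi (properFact g) (kernelCokernelCompMap g h)
  exact isIso_of_mono_of_strongEpi _

theorem IsProper.of_comp_of_mono [Mono h] (hp : IsProper (g ≫ h)) : IsProper g := by
  have := isIso_kernelCokernelCompMap g h hp
  rw [isProper_iff_isRegularEpi, ← properFact_comp_kernelCokernelCompMap] at hp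
  rw [isProper_iff_isRegularEpi]
  exact ((MorphismProperty.regularEpi A).cancel_right_of_respectsIso _ _).1 hp

end

theorem proper_of_comp_mono_general
    (A : Type u) [Category.{v} A] [HasZeroMorphisms A]
    [HasKernels A] [HasCokernels A]
    {B C D : A} (g : B ⟶ C) (h : C ⟶ D)
    (hp : IsProper (g ≫ h)) (hm : Mono h) :
    IsProper g ∧
    ∃! e : kernel (cokernel.π g) ≅ kernel (cokernel.π (g ≫ h)),
      properFact g ≫ e.hom = properFact (g ≫ h) ∧
      e.hom ≫ kernel.ι (cokernel.π (g ≫ h)) = kernel.ι (cokernel.π g) ≫ h := by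
  have := isIso_kernelCokernelCompMap g h hp
  refine ⟨hp.of_comp_of_mono g h, asIso (kernelCokernelCompMap g h),
    ⟨properFact_comp_kernelCokernelCompMap g h, kernelCokernelCompMap_ι g h⟩, fun e he ↦ ?_⟩
  ext1
  exact (cancel_mono _).1 (he.2.trans (kernelCokernelCompMap_ι g h).symm)

/-- **Statement 19** (Lemma: properness descends along post-composition with a mono).
Let `A` be a pointed category with kernels and cokernels.  If `g ≫ h` is proper and `h`
is a monomorphism, then `g` is proper; moreover the canonical factorizations of `g ≫ h`
and of `g` through the kernels of their cokernels coincide up to a unique isomorphism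
`Ker(c_g) ≅ Ker(c_{g ≫ h})` compatible with the inclusions into `D` and `C`. -/
theorem proper_of_comp_mono
    (A : Type u) [Category.{v} A] [HasZeroObject A] [HasZeroMorphisms A]
    [HasKernels A] [HasCokernels A]
    {B C D : A} (g : B ⟶ C) (h : C ⟶ D)
    (hp : IsProper (g ≫ h)) (hm : Mono h) :
    IsProper g ∧
    ∃! e : kernel (cokernel.π g) ≅ kernel (cokernel.π (g ≫ h)),
      properFact g ≫ e.hom = properFact (g ≫ h) ∧
      e.hom ≫ kernel.ι (cokernel.π (g ≫ h)) = kernel.ι (cokernel.π g) ≫ h :=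
  proper_of_comp_mono_general A g h hp hm
end
end
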